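/- arXiv:2304.06224 — 2 statements merged into one kernel-verified Lean document; each statement's English description precedes it below -/
import Mathlib

section
/- Let W be an sn×sn real matrix whose eigenvalue 1 has algebraic multiplicity s and geometric multiplicity 1, and let q_i be the monic polynomial of smallest degree with e_i^T q_i(W) = 0. Suppose the single eigenvector of W for eigenvalue 1 is [1_n^T, 0, ..., 0]^T with generalized eigenvector chain given by ε^{-(r-1)} e-block vectors in each block r. Then q_i factors as q_i(t) = (t-1)^{ℓ(i)} p_i(t) with p_i(1) ≠ 0 and ℓ(i) = s − ⌊i/n⌋, where ⌊·⌋ denotes the floor with the convention ⌊i/n⌋ = max{m ∈ ℤ : m < i/n}. -/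
open Polynomial Matrix

private lemma aux_sum_mulVec {ι N : Type*} [Fintype N] (t : Finset ι)
    (M : ι → Matrix N N ℝ) (u : N → ℝ) :
    (∑ j ∈ t, M j) *ᵥ u = ∑ j ∈ t, (M j) *ᵥ u := by
  induction t using Finset.cons_induction with
  | empty => simp [Matrix.zero_mulVec]
  | cons a t ha ih => simp [Finset.sum_cons, Matrix.add_mulVec, ih]

private lemma aux_step {s n : ℕ} (hs : 0 < s)
    (W : Matrix (Fin s × Fin n) (Fin s × Fin n) ℝ)
    (Q : Fin s → (Fin s × Fin n) → ℝ)
    (hchain0 : W.mulVec (Q ⟨0, hs⟩) = Q ⟨0, hs⟩)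
    (hchain : ∀ (r : ℕ) (h : r + 1 < s),
      W.mulVec (Q ⟨r + 1, h⟩) = Q ⟨r + 1, h⟩ + Q ⟨r, by omega⟩)
    (m : ℕ) (hm : m < s) :
    (W - 1).mulVec (Q ⟨m, hm⟩) = if h : 0 < m then Q ⟨m - 1, by omega⟩ else 0 := by
  have hsub : ∀ v, (W - 1).mulVec v = W.mulVec v - v := by
    intro v; rw [Matrix.sub_mulVec, Matrix.one_mulVec]
  cases m with
  | zero =>
      have h0 : Q ⟨0, hm⟩ = Q ⟨0, hs⟩ := rfl
      simp [hsub, h0, hchain0]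
  | succ t =>
      rw [hsub, hchain t hm]
      simp

private lemma aux_chainpow {s n : ℕ} (hs : 0 < s)
    (W : Matrix (Fin s × Fin n) (Fin s × Fin n) ℝ)
    (Q : Fin s → (Fin s × Fin n) → ℝ)
    (hchain0 : W.mulVec (Q ⟨0, hs⟩) = Q ⟨0, hs⟩)
    (hchain : ∀ (r : ℕ) (h : r + 1 < s),
      W.mulVec (Q ⟨r + 1, h⟩) = Q ⟨r + 1, h⟩ + Q ⟨r, by omega⟩)
    (j : ℕ) : ∀ (m : ℕ) (hm : m < s),
    ((W - 1) ^ j).mulVec (Q ⟨m, hm⟩) =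
      if h : j ≤ m then Q ⟨m - j, by omega⟩ else 0 := by
  induction j with
  | zero => intro m hm; simp
  | succ j ih =>
      intro m hm
      rw [pow_succ, ← Matrix.mulVec_mulVec, aux_step hs W Q hchain0 hchain m hm]
      by_cases h0 : 0 < m
      · rw [dif_pos h0, ih (m - 1) (by omega)]
        by_cases hj : j + 1 ≤ m
        · rw [dif_pos (by omega : j ≤ m - 1), dif_pos hj]
          exact congrArg Q (Fin.eq_of_val_eq (by simp; omega))
        · rw [dif_neg (by omega : ¬ j ≤ m - 1), dif_neg hj]
      · rw [dif_neg h0, Matrix.mulVec_zero, dif_neg (by omega)]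

private lemma aux_rowsum {s n : ℕ} (hs : 0 < s) (ε : ℝ)
    (W : Matrix (Fin s × Fin n) (Fin s × Fin n) ℝ)
    (Q : Fin s → (Fin s × Fin n) → ℝ)
    (hQ : ∀ (r : Fin s) (p : Fin s × Fin n),
      Q r p = if p.1 = r then (ε⁻¹) ^ (r : ℕ) else 0)
    (hchain0 : W.mulVec (Q ⟨0, hs⟩) = Q ⟨0, hs⟩)
    (hchain : ∀ (r : ℕ) (h : r + 1 < s),
      W.mulVec (Q ⟨r + 1, h⟩) = Q ⟨r + 1, h⟩ + Q ⟨r, by omega⟩)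
    (i : Fin s × Fin n) (f : ℝ[X]) (m : ℕ) (hm : m < s) :
    ((Polynomial.aeval W f).mulVec (Q ⟨m, hm⟩)) i =
      if ((i.1 : ℕ)) ≤ m then
        (f.comp (X + C 1)).coeff (m - (i.1 : ℕ)) * (ε⁻¹) ^ ((i.1 : ℕ)) else 0 := by
  classical
  set r : ℕ := (i.1 : ℕ) with hrdef
  set g : ℝ[X] := f.comp (X + C 1) with hgdef
  have hXC : ((X + C 1 : ℝ[X]).comp (X - C 1)) = X := by
    simp [add_comp]
  have hf : f = g.comp (X - C 1) := by
    rw [hgdef, Polynomial.comp_assoc, hXC, comp_X]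
  have haW : Polynomial.aeval W (X - C 1 : ℝ[X]) = W - 1 := by
    simp [_root_.map_sub, aeval_X, aeval_C, Algebra.algebraMap_eq_smul_one]
  have hWf : Polynomial.aeval W f = Polynomial.aeval (W - 1) g := by
    rw [hf, Polynomial.aeval_comp, haW]
  rw [hWf, Polynomial.aeval_eq_sum_range (p := g) (W - 1), aux_sum_mulVec]
  have hterm : ∀ jj : ℕ,
      (((g.coeff jj • (W - 1) ^ jj) *ᵥ (Q ⟨m, hm⟩)) i)
        = if r ≤ m ∧ jj = m - r then g.coeff jj * (ε⁻¹) ^ r else 0 := by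
    intro jj
    rw [Matrix.smul_mulVec, aux_chainpow hs W Q hchain0 hchain jj m hm]
    by_cases hj : jj ≤ m
    · rw [dif_pos hj]
      simp only [Pi.smul_apply, hQ, smul_eq_mul]
      by_cases hc : i.1 = (⟨m - jj, by omega⟩ : Fin s)
      · have hrval : r = m - jj := by rw [hrdef, hc]
        have ha1 : r ≤ m := by omega
        have ha2 : jj = m - r := by omega
        rw [if_pos hc, if_pos ⟨ha1, ha2⟩]
        rw [hrval]
      · rw [if_neg hc, if_neg]
        · ring
        · rintro ⟨h1, h2⟩
          exact hc (Fin.eq_of_val_eq (by simp; omega))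
    · rw [dif_neg hj]
      simp only [smul_zero, Pi.zero_apply]
      rw [if_neg]
      rintro ⟨h1, h2⟩
      omega
  rw [Finset.sum_apply]
  simp only [hterm]
  by_cases hr : r ≤ m
  · rw [if_pos hr]
    have hsimp : ∀ jj : ℕ, (if r ≤ m ∧ jj = m - r then g.coeff jj * (ε⁻¹) ^ r else 0)
        = if jj = m - r then g.coeff jj * (ε⁻¹) ^ r else 0 := by
      intro jj; simp [hr]
    simp only [hsimp]
    rw [Finset.sum_ite_eq' (Finset.range (g.natDegree + 1)) (m - r)
      (fun jj => g.coeff jj * (ε⁻¹) ^ r)]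
    by_cases hmem : m - r ∈ Finset.range (g.natDegree + 1)
    · rw [if_pos hmem]
    · rw [if_neg hmem]
      have : g.natDegree < m - r := by
        simp only [Finset.mem_range] at hmem; omega
      rw [Polynomial.coeff_eq_zero_of_natDegree_lt this, zero_mul]
  · simp [hr]

set_option maxHeartbeats 1600000 in
/-- Lemma 3: Let W be an sn×sn matrix (indexed by block r : Fin s and agent
    j : Fin n) whose eigenvalue 1 has algebraic multiplicity s and geometric
    multiplicity 1, with eigenvector [1ᵀ,0,…,0]ᵀ and generalized eigenvector
    chain Q_r = ε^{-r}·(indicator of block r).  Then the minimal polynomial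
    pair q_i at index i = (r, j) factors as q_i(t) = (t-1)^{s-r} p_i(t) with
    p_i(1) ≠ 0 (in the paper's 1-indexed notation, ℓ(i) = s − ⌊i/n⌋). -/
theorem minimal_polynomial_pair_factorization (s n : ℕ) (hs : 0 < s) (hn : 0 < n)
    (ε : ℝ) (hε : ε ≠ 0)
    (W : Matrix (Fin s × Fin n) (Fin s × Fin n) ℝ)
    (halg : W.charpoly.rootMultiplicity 1 = s)
    (hgeom : Module.finrank ℝ ↥(Module.End.eigenspace (Matrix.toLin' W) 1) = 1)
    (Q : Fin s → (Fin s × Fin n) → ℝ)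
    (hQ : ∀ (r : Fin s) (p : Fin s × Fin n),
      Q r p = if p.1 = r then (ε⁻¹) ^ (r : ℕ) else 0)
    (hchain0 : W.mulVec (Q ⟨0, hs⟩) = Q ⟨0, hs⟩)
    (hchain : ∀ (r : ℕ) (h : r + 1 < s),
      W.mulVec (Q ⟨r + 1, h⟩) = Q ⟨r + 1, h⟩ + Q ⟨r, by omega⟩)
    (i : Fin s × Fin n) (q : Polynomial ℝ) (hmonic : q.Monic)
    (hzero : ∀ j, (Polynomial.aeval W q) i j = 0)
    (hmin : ∀ p : Polynomial ℝ, p.Monic →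
      (∀ j, (Polynomial.aeval W p) i j = 0) → q.degree ≤ p.degree) :
    ∃ p : Polynomial ℝ,
      q = (Polynomial.X - 1) ^ (s - (i.1 : ℕ)) * p ∧ p.eval 1 ≠ 0 := by
  set r : ℕ := (i.1 : ℕ) with hrdef
  have hrs : r < s := i.1.isLt
  -- rows of products vanish
  have hrowmul : ∀ f h : ℝ[X], (∀ jdx, (Polynomial.aeval W f) i jdx = 0) →
      ∀ jdx, (Polynomial.aeval W (f * h)) i jdx = 0 := by
    intro f h hf jdx
    rw [_root_.map_mul, Matrix.mul_apply]
    simp [hf]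
  -- minimality gives divisibility
  have hdvd : ∀ f : ℝ[X], (∀ jdx, (Polynomial.aeval W f) i jdx = 0) → q ∣ f := by
    intro f hf
    rw [← Polynomial.modByMonic_eq_zero_iff_dvd hmonic]
    by_contra hb
    have hbrow : ∀ jdx, (Polynomial.aeval W (f %ₘ q)) i jdx = 0 := by
      intro jdx
      have hfd := Polynomial.modByMonic_add_div f q
      have : Polynomial.aeval W (f %ₘ q)
          = Polynomial.aeval W f - Polynomial.aeval W (q * (f /ₘ q)) := by
        rw [← _root_.map_sub]
        congr 1
        linear_combination hfd
      rw [this]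
      simp only [Matrix.sub_apply, hf jdx, hrowmul q (f /ₘ q) hzero jdx, sub_zero]
    have hmono := hmin ((f %ₘ q) * C (f %ₘ q).leadingCoeff⁻¹)
      (Polynomial.monic_mul_leadingCoeff_inv hb)
      (hrowmul _ _ hbrow)
    rw [Polynomial.degree_mul_leadingCoeff_inv _ hb] at hmono
    exact absurd (lt_of_le_of_lt hmono (Polynomial.degree_modByMonic_lt f hmonic))
      (lt_irrefl _)
  -- Part A : low coefficients of q ∘ (X+1) vanish
  have hA : ∀ t, t < s - r → (q.comp (X + C 1)).coeff t = 0 := by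
    intro t ht
    have hm : t + r < s := by omega
    have h1 := aux_rowsum hs ε W Q hQ hchain0 hchain i q (t + r) hm
    have h2 : ((Polynomial.aeval W q).mulVec (Q ⟨t + r, hm⟩)) i = 0 := by
      simp [Matrix.mulVec, dotProduct, hzero]
    rw [h2, if_pos (by omega : r ≤ t + r)] at h1
    have ht' : t + r - r = t := by omega
    rw [ht'] at h1
    have hεne : (ε⁻¹) ^ r ≠ 0 := pow_ne_zero _ (inv_ne_zero hε)
    have := h1.symm
    exact (mul_eq_zero.mp this).resolve_right hεne
  obtain ⟨h, hh⟩ : (X : ℝ[X]) ^ (s - r) ∣ q.comp (X + C 1) :=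
    Polynomial.X_pow_dvd_iff.mpr hA
  set p : ℝ[X] := h.comp (X - C 1) with hpdef
  have hXC : ((X + C 1 : ℝ[X]).comp (X - C 1)) = X := by simp [add_comp]
  have hfact : q = (X - C 1) ^ (s - r) * p := by
    have hq2 : q = (q.comp (X + C 1)).comp (X - C 1) := by
      rw [Polynomial.comp_assoc, hXC, comp_X]
    rw [hq2, hh, mul_comp, pow_comp, X_comp]
  -- charpoly factorization
  have hcne : W.charpoly ≠ 0 := (Matrix.charpoly_monic W).ne_zero
  set g : ℝ[X] := W.charpoly /ₘ (X - C 1) ^ s with hgdef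
  have hcfact : (X - C 1) ^ s * g = W.charpoly := by
    have := Polynomial.pow_mul_divByMonic_rootMultiplicity_eq W.charpoly 1
    rwa [halg] at this
  have hg1 : g.eval 1 ≠ 0 := by
    have := Polynomial.eval_divByMonic_pow_rootMultiplicity_ne_zero 1 hcne
    rwa [halg] at this
  have haW : Polynomial.aeval W (X - C 1 : ℝ[X]) = W - 1 := by
    simp [_root_.map_sub, aeval_X, aeval_C, Algebra.algebraMap_eq_smul_one]
  have haWpow : ∀ k : ℕ, Polynomial.aeval W ((X - C 1 : ℝ[X]) ^ k) = (W - 1) ^ k := by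
    intro k; rw [_root_.map_pow, haW]
  -- Part B : the row of (W-1)^(s-r) * g(W) vanishes
  set M₁ : Matrix (Fin s × Fin n) (Fin s × Fin n) ℝ :=
    Polynomial.aeval W ((X - C 1) ^ (s - r) * g) with hM₁def
  set v : (Fin s × Fin n) → ℝ := fun jdx => M₁ i jdx with hvdef
  have hvrow : ∀ N : Matrix (Fin s × Fin n) (Fin s × Fin n) ℝ,
      v ᵥ* N = fun jdx => (M₁ * N) i jdx := by
    intro N
    funext jdx
    simp [Matrix.vecMul, Matrix.mul_apply, dotProduct, hvdef]
  have hvr : v ᵥ* ((W - 1) ^ r) = 0 := by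
    rw [hvrow]
    have : M₁ * (W - 1) ^ r = 0 := by
      rw [hM₁def, ← haWpow r, ← _root_.map_mul]
      have hsum : s - r + r = s := by omega
      have heq : (X - C 1 : ℝ[X]) ^ (s - r) * g * (X - C 1) ^ r = W.charpoly := by
        calc (X - C 1 : ℝ[X]) ^ (s - r) * g * (X - C 1) ^ r
            = (X - C 1) ^ (s - r) * (X - C 1) ^ r * g := by ring
          _ = (X - C 1) ^ s * g := by rw [← pow_add, hsum]
          _ = W.charpoly := hcfact
      rw [heq, Matrix.aeval_self_charpoly]
    rw [this]
    funext jdx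
    simp
  have hvs : v ᵥ* ((W - 1) ^ s) = 0 := by
    have : (W - 1) ^ s = (W - 1) ^ r * (W - 1) ^ (s - r) := by
      rw [← pow_add]; congr 1; omega
    rw [this, ← Matrix.vecMul_vecMul, hvr, Matrix.zero_vecMul]
  have hvQ : ∀ (m : ℕ) (hm : m < s), v ⬝ᵥ Q ⟨m, hm⟩ = 0 := by
    intro m hm
    have hv1 : v ⬝ᵥ Q ⟨m, hm⟩ = (M₁.mulVec (Q ⟨m, hm⟩)) i := by
      simp [Matrix.mulVec, dotProduct, hvdef]
    rw [hv1, hM₁def, aux_rowsum hs ε W Q hQ hchain0 hchain i _ m hm]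
    by_cases hr : r ≤ m
    · rw [if_pos hr]
      have hcomp : (((X - C 1 : ℝ[X]) ^ (s - r) * g).comp (X + C 1))
          = g.comp (X + C 1) * X ^ (s - r) := by
        rw [mul_comp, pow_comp, sub_comp, X_comp, C_comp, add_sub_cancel_right]
        ring
      rw [hcomp, Polynomial.coeff_mul_X_pow', if_neg (by omega), zero_mul]
    · rw [if_neg hr]
  -- coprimality and Bezout
  have hcop : IsCoprime ((X - C 1 : ℝ[X]) ^ s) g := by
    apply IsCoprime.pow_left
    rw [(Polynomial.prime_X_sub_C (1 : ℝ)).coprime_iff_not_dvd]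
    intro hd
    exact hg1 (Polynomial.dvd_iff_isRoot.mp hd)
  obtain ⟨a, b, hab⟩ := hcop
  -- kernel of (W-1)^s equals span of Q
  have hQker : ∀ m : Fin s, Matrix.toLin' ((W - 1) ^ s) (Q m) = 0 := by
    intro m
    rw [Matrix.toLin'_apply]
    have := aux_chainpow hs W Q hchain0 hchain s (m : ℕ) m.isLt
    rw [dif_neg (by omega : ¬ s ≤ (m : ℕ))] at this
    have hQm : Q ⟨(m : ℕ), m.isLt⟩ = Q m := by congr
    rwa [hQm] at this
  have hQind : LinearIndependent ℝ Q := by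
    rw [Fintype.linearIndependent_iff]
    intro gc hsum m
    have hgc := congrFun hsum (m, ⟨0, hn⟩)
    simp only [Finset.sum_apply, Pi.smul_apply, Pi.zero_apply, smul_eq_mul, hQ] at hgc
    rw [Finset.sum_eq_single m] at hgc
    · simp only [if_pos rfl] at hgc
      have : (ε⁻¹) ^ (m : ℕ) ≠ 0 := pow_ne_zero _ (inv_ne_zero hε)
      exact (mul_eq_zero.mp hgc).resolve_right this
    · intro b _ hbm
      rw [if_neg (by simpa using hbm.symm ∘ Eq.symm ∘ id ∘ Eq.symm), mul_zero]
    · intro hm; exact absurd (Finset.mem_univ m) hm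
  have hspanrank : Module.finrank ℝ ↥(Submodule.span ℝ (Set.range Q)) = s := by
    rw [finrank_span_eq_card hQind, Fintype.card_fin]
  have hspanle : Submodule.span ℝ (Set.range Q) ≤
      LinearMap.ker (Matrix.toLin' ((W - 1) ^ s)) := by
    rw [Submodule.span_le]
    rintro x ⟨m, rfl⟩
    exact hQker m
  -- dimension of the kernel of (W-1)^k is at most k
  have hgeom1 : Module.finrank ℝ ↥(LinearMap.ker (Matrix.toLin' (W - 1))) = 1 := by
    have hkereq : LinearMap.ker (Matrix.toLin' (W - 1))
        = Module.End.eigenspace (Matrix.toLin' W) 1 := by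
      ext x
      rw [LinearMap.mem_ker, Module.End.mem_eigenspace_iff, Matrix.toLin'_apply,
        Matrix.toLin'_apply, Matrix.sub_mulVec, Matrix.one_mulVec, sub_eq_zero, one_smul]
    rw [hkereq]; exact hgeom
  have hkerpow : ∀ k : ℕ,
      Module.finrank ℝ ↥(LinearMap.ker (Matrix.toLin' ((W - 1) ^ k))) ≤ k := by
    intro k
    induction k with
    | zero =>
        have hk0 : LinearMap.ker (Matrix.toLin' ((W - 1) ^ 0)) = ⊥ := by
          rw [pow_zero, Matrix.toLin'_one, LinearMap.ker_id]
        rw [hk0, Nat.le_zero]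
        exact finrank_bot ℝ ((Fin s × Fin n) → ℝ)
    | succ t ih =>
        have hdecomp : Matrix.toLin' ((W - 1) ^ (t + 1))
            = (Matrix.toLin' (W - 1)) ∘ₗ (Matrix.toLin' ((W - 1) ^ t)) := by
          rw [← Matrix.toLin'_mul, ← pow_succ']
        set F := Matrix.toLin' ((W - 1) ^ t) with hF
        set f := Matrix.toLin' (W - 1) with hf
        set K := LinearMap.ker (Matrix.toLin' ((W - 1) ^ (t + 1))) with hK
        set φ : ↥K →ₗ[ℝ] ((Fin s × Fin n) → ℝ) := F ∘ₗ K.subtype with hφ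
        have hrange : LinearMap.range φ ≤ LinearMap.ker f := by
          rintro y ⟨⟨x, hx⟩, rfl⟩
          have : f (F x) = 0 := by
            rw [hK, LinearMap.mem_ker, hdecomp] at hx
            exact hx
          simpa [hφ, LinearMap.mem_ker] using this
        have h1 : Module.finrank ℝ ↥(LinearMap.range φ)
            + Module.finrank ℝ ↥(LinearMap.ker φ) = Module.finrank ℝ ↥K :=
          LinearMap.finrank_range_add_finrank_ker φ
        have h2 : Module.finrank ℝ ↥(LinearMap.range φ) ≤ 1 := by
          rw [← hgeom1]
          exact Submodule.finrank_mono hrange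
        have h3 : Module.finrank ℝ ↥(LinearMap.ker φ)
            ≤ Module.finrank ℝ ↥(LinearMap.ker F) := by
          have hinj : Function.Injective
              (fun x : ↥(LinearMap.ker φ) =>
                (⟨((x : ↥K) : (Fin s × Fin n) → ℝ),
                  LinearMap.mem_ker.mpr (LinearMap.mem_ker.mp x.2)⟩
                  : ↥(LinearMap.ker F))) := by
            intro x y hxy
            have hval := congrArg Subtype.val hxy
            exact Subtype.ext (Subtype.ext hval)
          exact LinearMap.finrank_le_finrank_of_injective
            (f := { toFun := fun x : ↥(LinearMap.ker φ) =>
                      (⟨((x : ↥K) : (Fin s × Fin n) → ℝ),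
                        LinearMap.mem_ker.mpr (LinearMap.mem_ker.mp x.2)⟩
                        : ↥(LinearMap.ker F)),
                    map_add' := by intro x y; rfl,
                    map_smul' := by intro c x; rfl }) hinj
        omega
  have hkerrank : Module.finrank ℝ ↥(LinearMap.ker (Matrix.toLin' ((W - 1) ^ s))) ≤ s :=
    hkerpow s
  have hkereq : Submodule.span ℝ (Set.range Q)
      = LinearMap.ker (Matrix.toLin' ((W - 1) ^ s)) :=
    Submodule.eq_of_le_of_finrank_le hspanle (by rw [hspanrank]; exact hkerrank)
  -- conclude v = 0
  have hvspan : ∀ x ∈ Submodule.span ℝ (Set.range Q), v ⬝ᵥ x = 0 := by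
    intro x hx
    induction hx using Submodule.span_induction with
    | mem y hy =>
        obtain ⟨m, rfl⟩ := hy
        have hQm : Q m = Q ⟨(m : ℕ), m.isLt⟩ := by congr
        rw [hQm]
        exact hvQ (m : ℕ) m.isLt
    | zero => simp [dotProduct]
    | add y z hy hz hy' hz' => rw [dotProduct_add, hy', hz', add_zero]
    | smul c y hy hy' => rw [dotProduct_smul, hy', smul_zero]
  have hone : (1 : Matrix (Fin s × Fin n) (Fin s × Fin n) ℝ)
      = Polynomial.aeval W a * ((W - 1) ^ s)
        + Polynomial.aeval W b * Polynomial.aeval W g := by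
    rw [← haWpow s, ← _root_.map_mul, ← _root_.map_mul, ← _root_.map_add, hab, _root_.map_one]
  have hz0 : ((W - 1) ^ s) *ᵥ ((Polynomial.aeval W b * Polynomial.aeval W g) *ᵥ v) = 0 := by
    rw [Matrix.mulVec_mulVec, ← haWpow s, ← _root_.map_mul, ← _root_.map_mul]
    have : (X - C 1 : ℝ[X]) ^ s * (b * g) = b * W.charpoly := by
      rw [← hcfact]; ring
    rw [this, _root_.map_mul, Matrix.aeval_self_charpoly, mul_zero, Matrix.zero_mulVec]
  have hvz : v ⬝ᵥ ((Polynomial.aeval W b * Polynomial.aeval W g) *ᵥ v) = 0 := by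
    apply hvspan
    rw [hkereq, LinearMap.mem_ker, Matrix.toLin'_apply, Matrix.mulVec_mulVec]
    rw [Matrix.mulVec_mulVec] at hz0
    exact hz0
  have hva : v ⬝ᵥ ((Polynomial.aeval W a * ((W - 1) ^ s)) *ᵥ v) = 0 := by
    rw [Matrix.dotProduct_mulVec]
    have hcomm : Polynomial.aeval W a * ((W - 1) ^ s)
        = ((W - 1) ^ s) * Polynomial.aeval W a := by
      rw [← haWpow s, ← _root_.map_mul, ← _root_.map_mul, mul_comm]
    rw [hcomm, ← Matrix.vecMul_vecMul, hvs, Matrix.zero_vecMul, zero_dotProduct]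
  have hvv : v ⬝ᵥ v = 0 := by
    have h1v : v = (Polynomial.aeval W a * ((W - 1) ^ s)) *ᵥ v
        + (Polynomial.aeval W b * Polynomial.aeval W g) *ᵥ v := by
      rw [← Matrix.add_mulVec, ← hone, Matrix.one_mulVec]
    have h2v := congrArg (fun w => v ⬝ᵥ w) h1v
    simp only [dotProduct_add] at h2v
    rw [hva, hvz, add_zero] at h2v
    exact h2v
  have hv0 : v = 0 := dotProduct_self_eq_zero.mp hvv
  -- q divides (X - 1)^(s-r) * g
  have hqdvd : q ∣ (X - C 1) ^ (s - r) * g := by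
    apply hdvd
    intro jdx
    have := congrFun hv0 jdx
    simpa [hvdef, hM₁def] using this
  refine ⟨p, ?_, ?_⟩
  · rw [hfact, Polynomial.C_1]
  · intro hp1
    obtain ⟨u, hu⟩ := hqdvd
    rw [hfact, mul_assoc] at hu
    have hXne : ((X - C 1 : ℝ[X]) ^ (s - r)) ≠ 0 :=
      pow_ne_zero _ (Polynomial.X_sub_C_ne_zero 1)
    have hgu : g = p * u := mul_left_cancel₀ hXne hu
    apply hg1
    rw [hgu, Polynomial.eval_mul, hp1, zero_mul]
end

section
/- Let W = S J S^{-1} where the first s columns of S form the Jordan chain of W for eigenvalue 1 (algebraic multiplicity s, geometric multiplicity 1) and all other eigenvalues of W lie strictly inside the unit disk. Let 𝒦_r = (S^{-1} X(0))_r for r = 1,...,s. Then for each agent state X_i(k) of the consensus dynamics X(k) = W X(k-1), lim_{k→∞} ( X_i(k) − ∑_{r=1}^{s} e_s^r ∑_{h=0}^{s-r} C(k,h) 𝒦_{r+h} ) = 0. -/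
/-- The s×s Jordan block with eigenvalue `lam`. -/
def jordanBlock (s : ℕ) (lam : ℝ) : Matrix (Fin s) (Fin s) ℝ :=
  fun i j => if (j : ℕ) = (i : ℕ) then lam
             else if (j : ℕ) = (i : ℕ) + 1 then 1 else 0

open Filter Matrix
open scoped ENNReal NNReal

noncomputable section ConsensusAux

attribute [local instance] Matrix.linftyOpNormedRing Matrix.linftyOpNormedAlgebra

private lemma entry_le_norm' {m : ℕ} (A : Matrix (Fin m) (Fin m) ℂ) (i j : Fin m) :
    ‖A i j‖₊ ≤ ‖A‖₊ := by
  rw [Matrix.linfty_opNNNorm_def]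
  exact le_trans (Finset.single_le_sum (f := fun j => ‖A i j‖₊) (fun _ _ => zero_le)
    (Finset.mem_univ j)) (Finset.le_sup (f := fun i => ∑ j, ‖A i j‖₊) (Finset.mem_univ i))

private lemma spec_root' {m : ℕ} (A : Matrix (Fin m) (Fin m) ℂ) (μ : ℂ)
    (hμ : μ ∈ spectrum ℂ A) : A.charpoly.IsRoot μ := by
  rw [spectrum.mem_iff] at hμ
  rw [Matrix.isUnit_iff_isUnit_det] at hμ
  have hdet : (algebraMap ℂ (Matrix (Fin m) (Fin m) ℂ) μ - A).det
      = Polynomial.eval μ A.charpoly := by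
    rw [Matrix.charpoly, ← Polynomial.coe_evalRingHom, RingHom.map_det]
    congr 1
    ext i j
    by_cases h : i = j <;>
      simp [h, Matrix.charmatrix_apply, Matrix.algebraMap_matrix_apply, Matrix.map_apply,
        Matrix.diagonal_apply]
  rw [hdet, isUnit_iff_ne_zero, not_not] at hμ
  exact hμ

private lemma cpow_entry_tendsto {m : ℕ} [Nonempty (Fin m)] (A : Matrix (Fin m) (Fin m) ℂ)
    (hA : ∀ μ : ℂ, A.charpoly.IsRoot μ → ‖μ‖ < 1) (i j : Fin m) :
    Tendsto (fun k : ℕ => (A ^ k) i j) atTop (nhds 0) := by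
  haveI : CompleteSpace (Matrix (Fin m) (Fin m) ℂ) := FiniteDimensional.complete ℂ _
  have hρ : spectralRadius ℂ A < ((1 : ℝ≥0) : ℝ≥0∞) := by
    apply spectrum.spectralRadius_lt_of_forall_lt_of_nonempty (spectrum.nonempty A)
    intro k hk
    have := hA k (spec_root' A k hk)
    simpa [← NNReal.coe_lt_coe] using this
  obtain ⟨r, hρr, hr1⟩ := ENNReal.lt_iff_exists_nnreal_btwn.mp hρ
  have hge :=
    (spectrum.pow_nnnorm_pow_one_div_tendsto_nhds_spectralRadius A).eventually_lt_const hρr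
  have hbound : ∀ᶠ n : ℕ in atTop, ‖A ^ n‖₊ ≤ r ^ n := by
    filter_upwards [hge, eventually_ge_atTop 1] with n hn hn1
    have h1 : ((‖A ^ n‖₊ : ℝ≥0∞) ^ (1 / n : ℝ)) ^ (n : ℝ) ≤ ((r : ℝ≥0∞)) ^ (n : ℝ) :=
      ENNReal.rpow_le_rpow hn.le (by positivity)
    rw [← ENNReal.rpow_mul, one_div,
      inv_mul_cancel₀ (by exact_mod_cast Nat.one_le_iff_ne_zero.mp hn1),
      ENNReal.rpow_one] at h1
    rw [ENNReal.rpow_natCast] at h1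
    exact_mod_cast (by exact_mod_cast h1 : (‖A ^ n‖₊ : ℝ≥0∞) ≤ ((r ^ n : ℝ≥0) : ℝ≥0∞))
  have hr1' : (r : ℝ) < 1 := by exact_mod_cast hr1
  have htend : Tendsto (fun n : ℕ => ((r : ℝ)) ^ n) atTop (nhds 0) :=
    tendsto_pow_atTop_nhds_zero_of_lt_one r.coe_nonneg hr1'
  have hnorm : Tendsto (fun n : ℕ => ‖(A ^ n) i j‖) atTop (nhds 0) := by
    apply squeeze_zero' (Eventually.of_forall fun n => norm_nonneg _) _ htend
    filter_upwards [hbound] with n hn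
    calc ‖(A ^ n) i j‖ ≤ ‖A ^ n‖ := by exact_mod_cast entry_le_norm' (A ^ n) i j
      _ ≤ (r : ℝ) ^ n := by exact_mod_cast hn
  exact tendsto_zero_iff_norm_tendsto_zero.mpr hnorm

private lemma rpow_entry_tendsto {m : ℕ} (Z : Matrix (Fin m) (Fin m) ℝ)
    (hZ : ∀ μ : ℂ, ((Z.map (Complex.ofReal ·)).charpoly).IsRoot μ → ‖μ‖ < 1) (i j : Fin m) :
    Tendsto (fun k : ℕ => (Z ^ k) i j) atTop (nhds 0) := by
  haveI : Nonempty (Fin m) := ⟨i⟩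
  have hmap : ∀ k : ℕ, ((Z.map (Complex.ofReal ·)) ^ k) i j = ((Z ^ k) i j : ℂ) := by
    intro k
    have : (Z.map (Complex.ofReal ·)) = Complex.ofRealHom.mapMatrix Z := rfl
    rw [this, ← map_pow]
    rfl
  have h := cpow_entry_tendsto (Z.map (Complex.ofReal ·)) hZ i j
  rw [tendsto_zero_iff_norm_tendsto_zero] at h
  rw [tendsto_zero_iff_norm_tendsto_zero]
  convert h using 2 with k
  rw [hmap k]
  simp

end ConsensusAux

private def nilShift (s : ℕ) : Matrix (Fin s) (Fin s) ℝ :=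
  fun i j => if (j : ℕ) = (i : ℕ) + 1 then 1 else 0

private lemma nilShift_pow (s : ℕ) : ∀ (h : ℕ) (i j : Fin s),
    (nilShift s ^ h) i j = if (j : ℕ) = (i : ℕ) + h then 1 else 0 := by
  intro h
  induction h with
  | zero =>
    intro i j
    simp [Matrix.one_apply, Fin.ext_iff, eq_comm]
  | succ h ih =>
    intro i j
    rw [pow_succ, Matrix.mul_apply]
    by_cases hc : (j : ℕ) = (i : ℕ) + h + 1
    · have hlt : (i : ℕ) + h < s := by omega
      rw [Finset.sum_eq_single (⟨(i : ℕ) + h, hlt⟩ : Fin s)]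
      · simp [ih, nilShift, hc, Nat.add_assoc]
      · intro l _ hl
        rw [ih]
        have : (l : ℕ) ≠ (i : ℕ) + h := fun he => hl (by ext; simp [he])
        simp [this]
      · simp
    · rw [if_neg (by omega : ¬ (j : ℕ) = (i : ℕ) + (h + 1))]
      apply Finset.sum_eq_zero
      intro l _
      rw [ih]
      by_cases h1 : (l : ℕ) = (i : ℕ) + h
      · simp [h1, nilShift]; omega
      · simp [h1]

private lemma jordan_pow_apply (s : ℕ) (k : ℕ) (i j : Fin s) :
    ((jordanBlock s 1) ^ k) i j
      = if (i : ℕ) ≤ (j : ℕ) then (k.choose ((j : ℕ) - (i : ℕ)) : ℝ) else 0 := by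
  have hJ : jordanBlock s 1 = nilShift s + 1 := by
    ext a b
    simp only [jordanBlock, nilShift, Matrix.add_apply, Matrix.one_apply]
    rcases eq_or_ne (b : ℕ) (a : ℕ) with h | h
    · have : a = b := by ext; omega
      simp [h, this]
    · have : ¬ a = b := fun he => h (by rw [he])
      simp [h, this]
  rw [hJ, (Commute.one_right (nilShift s)).add_pow]
  rw [Matrix.sum_apply]
  have hterm : ∀ h ∈ Finset.range (k + 1),
      (nilShift s ^ h * 1 ^ (k - h) * (k.choose h : Matrix (Fin s) (Fin s) ℝ)) i j
        = if (j : ℕ) = (i : ℕ) + h then (k.choose h : ℝ) else 0 := by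
    intro h _
    rw [one_pow, mul_one]
    have : (k.choose h : Matrix (Fin s) (Fin s) ℝ) = (k.choose h : ℝ) • 1 := by
      rw [Matrix.smul_one_eq_diagonal, ← Matrix.diagonal_natCast]
    rw [this, Matrix.mul_smul, mul_one, Matrix.smul_apply, nilShift_pow]
    by_cases hc : (j : ℕ) = (i : ℕ) + h <;> simp [hc]
  rw [Finset.sum_congr rfl hterm]
  by_cases hij : (i : ℕ) ≤ (j : ℕ)
  · by_cases hk : (j : ℕ) - (i : ℕ) ≤ k
    · rw [Finset.sum_eq_single ((j : ℕ) - (i : ℕ))]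
      · rw [if_pos (by omega : (j : ℕ) = (i : ℕ) + ((j : ℕ) - (i : ℕ))), if_pos hij]
      · intro h _ hne
        have : (j : ℕ) ≠ (i : ℕ) + h := by omega
        simp [this]
      · intro habs
        exact absurd (Finset.mem_range.mpr (by omega)) habs
    · rw [Finset.sum_eq_zero, if_pos hij, Nat.choose_eq_zero_of_lt (by omega), Nat.cast_zero]
      intro h hh
      rw [Finset.mem_range] at hh
      have : (j : ℕ) ≠ (i : ℕ) + h := by omega
      simp [this]
  · rw [Finset.sum_eq_zero, if_neg hij]
    intro h _
    have : (j : ℕ) ≠ (i : ℕ) + h := by omega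
    simp [this]

private lemma jordan_mulVec (s k : ℕ) (w : Fin s → ℝ) (u : ℕ → ℝ)
    (hu : ∀ r' : Fin s, u (r' : ℕ) = w r') (r : Fin s) :
    ((jordanBlock s 1 ^ k).mulVec w) r
      = ∑ h ∈ Finset.range (s - (r : ℕ)), (k.choose h : ℝ) * u ((r : ℕ) + h) := by
  rw [Matrix.mulVec, dotProduct]
  have h1 : ∀ r' : Fin s, (jordanBlock s 1 ^ k) r r' * w r'
      = if (r : ℕ) ≤ (r' : ℕ) then (k.choose ((r' : ℕ) - (r : ℕ)) : ℝ) * w r' else 0 := by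
    intro r'
    rw [jordan_pow_apply]
    by_cases h : (r : ℕ) ≤ (r' : ℕ) <;> simp [h]
  rw [Finset.sum_congr rfl fun r' _ => h1 r', ← Finset.sum_filter]
  refine Finset.sum_bij' (i := fun (r' : Fin s) _ => (r' : ℕ) - (r : ℕ))
    (j := fun (h : ℕ) (hh : h ∈ Finset.range (s - (r : ℕ))) =>
      (⟨(r : ℕ) + h, by rw [Finset.mem_range] at hh; omega⟩ : Fin s)) ?_ ?_ ?_ ?_ ?_
  · intro a ha
    simp only [Finset.mem_filter, Finset.mem_univ, true_and] at ha
    rw [Finset.mem_range]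
    omega
  · intro a ha
    simp only [Finset.mem_filter, Finset.mem_univ, true_and]
    simp
  · intro a ha
    simp only [Finset.mem_filter, Finset.mem_univ, true_and] at ha
    ext
    simp [Nat.add_sub_cancel' ha]
  · intro a _
    dsimp only
    simp
  · intro a ha
    simp only [Finset.mem_filter, Finset.mem_univ, true_and] at ha
    have : u ((r : ℕ) + ((a : ℕ) - (r : ℕ))) = w a := by
      rw [Nat.add_sub_cancel' ha]
      exact hu a
    rw [this]


/-- Corollary 1: let W = S·diag(J(1), Z)·S⁻¹ where J(1) is the s×s Jordan block
    at eigenvalue 1 (algebraic multiplicity s, geometric multiplicity 1), all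
    eigenvalues of Z lie strictly inside the unit disk, and the first s columns
    of S (the Jordan chain) restricted to the rows `idx r` of a fixed agent's
    state form the identity.  With 𝒦_r = (S⁻¹ X(0))_r, each component of the
    agent's state satisfies
    X_i(k)_r − ∑_{h=0}^{s-1-r} C(k,h) 𝒦_{r+h} → 0 as k → ∞. -/
theorem consensus_trajectory_limit (s m : ℕ) (hs : 0 < s)
    (W S : Matrix (Fin s ⊕ Fin m) (Fin s ⊕ Fin m) ℝ)
    (hS : IsUnit S.det)
    (Z : Matrix (Fin m) (Fin m) ℝ)
    (hZ : ∀ μ : ℂ, ((Z.map (Complex.ofReal ·)).charpoly).IsRoot μ → ‖μ‖ < 1)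
    (hW : W = S * Matrix.fromBlocks (jordanBlock s 1) 0 0 Z * S⁻¹)
    (idx : Fin s → (Fin s ⊕ Fin m)) (hinj : Function.Injective idx)
    (hidx : ∀ r r' : Fin s, S (idx r) (Sum.inl r') = if r = r' then 1 else 0)
    (X0 : (Fin s ⊕ Fin m) → ℝ) (𝒦 : ℕ → ℝ)
    (h𝒦 : ∀ r : Fin s, 𝒦 (r : ℕ) = (S⁻¹).mulVec X0 (Sum.inl r)) :
    ∀ r : Fin s,
      Filter.Tendsto
        (fun k : ℕ => ((W ^ k).mulVec X0) (idx r) -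
          ∑ h ∈ Finset.range (s - (r : ℕ)), (Nat.choose k h : ℝ) * 𝒦 ((r : ℕ) + h))
        Filter.atTop (nhds 0) := by
  intro r
  set y : (Fin s ⊕ Fin m) → ℝ := (S⁻¹).mulVec X0 with hy
  have hWk : ∀ k : ℕ, W ^ k
      = S * Matrix.fromBlocks ((jordanBlock s 1) ^ k) 0 0 (Z ^ k) * S⁻¹ := by
    intro k
    induction k with
    | zero =>
      rw [pow_zero, pow_zero, pow_zero, Matrix.fromBlocks_one, Matrix.mul_one,
        Matrix.mul_nonsing_inv S hS]
    | succ k ih =>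
      rw [pow_succ, ih, hW]
      simp only [Matrix.mul_assoc]
      rw [← Matrix.mul_assoc S⁻¹ S, Matrix.nonsing_inv_mul S hS, Matrix.one_mul]
      rw [← Matrix.mul_assoc (Matrix.fromBlocks ((jordanBlock s 1) ^ k) 0 0 (Z ^ k)) _ S⁻¹,
        Matrix.fromBlocks_multiply]
      simp [pow_succ]
  have key : ∀ k : ℕ, ((W ^ k).mulVec X0) (idx r)
      - ∑ h ∈ Finset.range (s - (r : ℕ)), (Nat.choose k h : ℝ) * 𝒦 ((r : ℕ) + h)
      = ∑ j : Fin m, S (idx r) (Sum.inr j) * ((Z ^ k).mulVec (y ∘ Sum.inr)) j := by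
    intro k
    rw [hWk k, ← Matrix.mulVec_mulVec, ← Matrix.mulVec_mulVec, ← hy]
    set v := (Matrix.fromBlocks ((jordanBlock s 1) ^ k) 0 0 (Z ^ k)).mulVec y with hv
    have hvl : ∀ r' : Fin s, v (Sum.inl r')
        = ((jordanBlock s 1 ^ k).mulVec (y ∘ Sum.inl)) r' := by
      intro r'
      rw [hv, Matrix.fromBlocks_mulVec]
      simp
    have hvr : ∀ j : Fin m, v (Sum.inr j) = ((Z ^ k).mulVec (y ∘ Sum.inr)) j := by
      intro j
      rw [hv, Matrix.fromBlocks_mulVec]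
      simp
    rw [show S.mulVec v (idx r) = ∑ x, S (idx r) x * v x from rfl, Fintype.sum_sum_type]
    have hfst : ∑ r' : Fin s, S (idx r) (Sum.inl r') * v (Sum.inl r')
        = v (Sum.inl r) := by
      rw [Finset.sum_congr rfl fun r' _ => by rw [hidx r r']]
      simp [ite_mul]
    rw [hfst, hvl r, jordan_mulVec s k (y ∘ Sum.inl) 𝒦 (fun r' => h𝒦 r') r]
    rw [Finset.sum_congr rfl fun j _ => congrArg (S (idx r) (Sum.inr j) * ·) (hvr j)]
    ring
  rw [show (fun k : ℕ => ((W ^ k).mulVec X0) (idx r) -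
        ∑ h ∈ Finset.range (s - (r : ℕ)), (Nat.choose k h : ℝ) * 𝒦 ((r : ℕ) + h))
      = fun k : ℕ => ∑ j : Fin m, S (idx r) (Sum.inr j) * ((Z ^ k).mulVec (y ∘ Sum.inr)) j
    from funext key]
  have hzero : ∀ j : Fin m, Tendsto
      (fun k : ℕ => ((Z ^ k).mulVec (y ∘ Sum.inr)) j) atTop (nhds 0) := by
    intro j
    have : ∀ k : ℕ, ((Z ^ k).mulVec (y ∘ Sum.inr)) j
        = ∑ j' : Fin m, (Z ^ k) j j' * y (Sum.inr j') := fun k => rfl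
    simp only [this]
    have h0 : (0 : ℝ) = ∑ j' : Fin m, 0 * y (Sum.inr j') := by simp
    rw [h0]
    exact tendsto_finset_sum _ fun j' _ =>
      (rpow_entry_tendsto Z hZ j j').mul_const (y (Sum.inr j'))
  have h0 : (0 : ℝ) = ∑ j : Fin m, S (idx r) (Sum.inr j) * 0 := by simp
  rw [h0]
  exact tendsto_finset_sum _ fun j _ => (hzero j).const_mul _
end
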